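/- arXiv:2004.08115 — 4 statements merged into one kernel-verified Lean document; each statement's English description precedes it below -/
import Mathlib

section
/- Let N ≥ 1 be an integer and x ∈ ℝ^N. For every permutation τ of {1,…,N}, Σ_{k=1}^N (N − 2k + 1)·x_{τ(k)} ≤ Σ_{1 ≤ k < l ≤ N} |x_k − x_l|; combined with the sorted-vector identity this shows p(x) = max over permutations τ of ⟨w, x∘τ⟩. -/
open Finset

/-- Swap the double sum over pairs `k < l`. -/
lemma sum_Ioi_swap {N : ℕ} (f : Fin N → ℝ) :
    ∑ k : Fin N, ∑ l ∈ Finset.Ioi k, f l = ∑ l : Fin N, ∑ k ∈ Finset.Iio l, f l := by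
  refine Finset.sum_comm' ?_
  intro k l
  simp [and_comm]

/-- The telescoping identity. -/
lemma weight_sum_eq {N : ℕ} (g : Fin N → ℝ) :
    ∑ k : Fin N, ((N : ℝ) - 2 * (k : ℕ) - 1) * g k
      = ∑ k : Fin N, ∑ l ∈ Finset.Ioi k, (g k - g l) := by
  simp_rw [Finset.sum_sub_distrib]
  rw [sum_Ioi_swap g, ← Finset.sum_sub_distrib]
  refine Finset.sum_congr rfl fun k _ => ?_
  rw [Finset.sum_const, Finset.sum_const, Fin.card_Ioi, Fin.card_Iio, nsmul_eq_mul,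
    nsmul_eq_mul]
  have hk : (k : ℕ) + 1 ≤ N := k.isLt
  have : ((N - 1 - (k : ℕ) : ℕ) : ℝ) = (N : ℝ) - 1 - (k : ℕ) := by
    have : (k : ℕ) ≤ N - 1 := by omega
    push_cast [Nat.cast_sub (by omega : 1 ≤ N), Nat.cast_sub this]
    ring
  rw [this]; ring

/-- Sum of absolute pairwise differences over `k < l` is half the full double sum. -/
lemma two_mul_sum_abs {N : ℕ} (g : Fin N → ℝ) :
    2 * ∑ k : Fin N, ∑ l ∈ Finset.Ioi k, |g k - g l|
      = ∑ k : Fin N, ∑ l : Fin N, |g k - g l| := by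
  have h := Finset.sum_sum_Ioi_add_eq_sum_sum_off_diag (fun i j : Fin N => |g i - g j|)
  have h1 : ∑ i : Fin N, ∑ j ∈ Finset.Ioi i, (|g j - g i| + |g i - g j|)
      = 2 * ∑ k : Fin N, ∑ l ∈ Finset.Ioi k, |g k - g l| := by
    rw [Finset.mul_sum]
    refine Finset.sum_congr rfl fun k _ => ?_
    rw [Finset.mul_sum]
    refine Finset.sum_congr rfl fun l _ => ?_
    rw [abs_sub_comm (g l)]; ring
  rw [h1] at h
  rw [h]
  refine Finset.sum_congr rfl fun k _ => ?_
  have h3 : ∑ j ∈ ({k} : Finset (Fin N))ᶜ, |g j - g k| = ∑ j : Fin N, |g j - g k| := by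
    rw [← Finset.sum_compl_add_sum {k} (fun j => |g j - g k|)]; simp
  convert h3.trans (Finset.sum_congr rfl fun l _ => abs_sub_comm _ _)

/-- The full double sum is invariant under permutation. -/
lemma full_sum_perm {N : ℕ} (x : Fin N → ℝ) (τ : Equiv.Perm (Fin N)) :
    ∑ k : Fin N, ∑ l : Fin N, |x (τ k) - x (τ l)| = ∑ k : Fin N, ∑ l : Fin N, |x k - x l| := by
  rw [Equiv.sum_comp τ (fun k => ∑ l : Fin N, |x k - x (τ l)|)]
  exact Finset.sum_congr rfl fun k _ => Equiv.sum_comp τ (fun l => |x k - x l|)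

/-- For every permutation `τ` of `{1,…,N}`,
`Σ_k (N − 2k + 1) x_{τ(k)} ≤ Σ_{k<l} |x_k − x_l| = p(x)`
(here `k : Fin N` is 0-based, so the weight is `N − 2(k+1) + 1 = N − 2k − 1`). -/
theorem clustered_lasso_perm_upper_bound (N : ℕ) (hN : 1 ≤ N) (x : Fin N → ℝ)
    (τ : Equiv.Perm (Fin N)) :
    ∑ k : Fin N, ((N : ℝ) - 2 * (k : ℕ) - 1) * x (τ k) ≤
      ∑ k : Fin N, ∑ l ∈ Finset.Ioi k, |x k - x l| := by
  rw [weight_sum_eq (fun k => x (τ k))]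
  calc ∑ k : Fin N, ∑ l ∈ Finset.Ioi k, (x (τ k) - x (τ l))
      ≤ ∑ k : Fin N, ∑ l ∈ Finset.Ioi k, |x (τ k) - x (τ l)| := by
        refine Finset.sum_le_sum fun k _ => Finset.sum_le_sum fun l _ => le_abs_self _
    _ = ∑ k : Fin N, ∑ l ∈ Finset.Ioi k, |x k - x l| := by
        have h2 : 2 * ∑ k : Fin N, ∑ l ∈ Finset.Ioi k, |x (τ k) - x (τ l)|
            = 2 * ∑ k : Fin N, ∑ l ∈ Finset.Ioi k, |x k - x l| := by
          rw [two_mul_sum_abs (fun k => x (τ k)), two_mul_sum_abs x]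
          exact full_sum_perm x τ
        linarith
end

section
/- Let N ≥ 1, λ > 0, y ∈ ℝ^N, and let σ be a permutation of {1,…,N} such that y_{σ(1)} ≥ … ≥ y_{σ(N)}. Let c ∈ ℝ^N be given by c_k = y_{σ(k)} − λ w_k, and let z be the unique point of D minimizing ‖z − c‖² over D (the Euclidean projection of c onto D). Define x* ∈ ℝ^N by x*_{σ(k)} = z_k for k = 1,…,N. Then x* is the unique minimizer over ℝ^N of the function x ↦ ½‖x − y‖² + λ p(x); that is, Prox_{λp}(y) = P_yᵀ Π_D(P_y y − λ w) for any sorting permutation matrix P_y of y. -/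
private lemma swap_Ioi {N : ℕ} (f : Fin N → Fin N → ℝ) :
    ∑ k, ∑ l ∈ Finset.Ioi k, f k l = ∑ l, ∑ k ∈ Finset.Iio l, f k l :=
  Finset.sum_comm' (by simp [and_comm])

private lemma half_double {N : ℕ} (x : Fin N → ℝ) :
    ∑ k, ∑ l ∈ Finset.Ioi k, |x k - x l|
      = (1 / 2) * ∑ k, ∑ l, |x k - x l| := by
  have hsplit : ∀ k : Fin N, ∑ l, |x k - x l|
      = ∑ l ∈ Finset.Iio k, |x k - x l| + ∑ l ∈ Finset.Ioi k, |x k - x l| := by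
    intro k
    have h1 : (Finset.univ : Finset (Fin N)) = Finset.Iio k ∪ Finset.Ici k := by
      ext l; simp [le_or_gt, lt_or_ge, or_comm, Finset.mem_Iio, Finset.mem_Ici]
    have h2 : Finset.Ici k = insert k (Finset.Ioi k) := by
      ext l; simp [Finset.mem_Ici, Finset.mem_Ioi, le_iff_lt_or_eq, eq_comm, or_comm]
    rw [h1, Finset.sum_union (by simp [Finset.disjoint_left]), h2,
      Finset.sum_insert (by simp)]
    simp
  have hswap : ∑ k, ∑ l ∈ Finset.Iio k, |x k - x l|
      = ∑ k, ∑ l ∈ Finset.Ioi k, |x k - x l| := by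
    rw [← swap_Ioi fun k l => |x l - x k|]
    simp [abs_sub_comm]
  simp only [hsplit, Finset.sum_add_distrib, hswap]
  ring

private lemma p_perm {N : ℕ} (x : Fin N → ℝ) (σ : Equiv.Perm (Fin N)) :
    ∑ k, ∑ l ∈ Finset.Ioi k, |x (σ k) - x (σ l)|
      = ∑ k, ∑ l ∈ Finset.Ioi k, |x k - x l| := by
  rw [half_double, half_double]
  congr 1
  rw [← Equiv.sum_comp σ (fun k => ∑ l, |x k - x l|)]
  refine Finset.sum_congr rfl fun k _ => ?_
  exact Equiv.sum_comp σ fun l => |x (σ k) - x l|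

private lemma linear_id {N : ℕ} (v : Fin N → ℝ) :
    ∑ k, ∑ l ∈ Finset.Ioi k, (v k - v l)
      = ∑ k : Fin N, ((N : ℝ) - 2 * (k : ℕ) - 1) * v k := by
  have h1 : ∑ k, ∑ l ∈ Finset.Ioi k, (v k - v l)
      = ∑ k, ((Finset.Ioi k).card : ℝ) * v k - ∑ k, ∑ l ∈ Finset.Ioi k, v l := by
    simp only [Finset.sum_sub_distrib, Finset.sum_const, nsmul_eq_mul]
  have h2 : ∑ k, ∑ l ∈ Finset.Ioi k, v l
      = ∑ l, ((Finset.Iio l).card : ℝ) * v l := by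
    rw [swap_Ioi fun k l => v l]
    simp [mul_comm]
  rw [h1, h2, ← Finset.sum_sub_distrib]
  refine Finset.sum_congr rfl fun k _ => ?_
  rw [Fin.card_Ioi, Fin.card_Iio]
  have hk : (k : ℕ) + 1 ≤ N := k.isLt
  have : ((N - 1 - (k : ℕ) : ℕ) : ℝ) = (N : ℝ) - 1 - (k : ℕ) := by
    rw [Nat.sub_sub]
    push_cast [Nat.cast_sub (by omega : 1 + (k : ℕ) ≤ N)]
    ring
  rw [this]; ring

private lemma p_sorted {N : ℕ} (v : Fin N → ℝ) (hv : Antitone v) :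
    ∑ k, ∑ l ∈ Finset.Ioi k, |v k - v l|
      = ∑ k : Fin N, ((N : ℝ) - 2 * (k : ℕ) - 1) * v k := by
  rw [← linear_id]
  refine Finset.sum_congr rfl fun k _ => Finset.sum_congr rfl fun l hl => ?_
  rw [Finset.mem_Ioi] at hl
  exact abs_of_nonneg (sub_nonneg.mpr (hv hl.le))

private lemma weak_min (N : ℕ) (lam : ℝ) (hlam : 0 < lam)
    (y : Fin N → ℝ) (σ : Equiv.Perm (Fin N)) (hsort : Antitone fun k => y (σ k))
    (c : Fin N → ℝ) (hc : ∀ k : Fin N, c k = y (σ k) - lam * ((N : ℝ) - 2 * (k : ℕ) - 1))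
    (z : Fin N → ℝ) (hzD : Antitone z)
    (hzproj : ∀ u : Fin N → ℝ, Antitone u →
      ∑ i, (z i - c i) ^ 2 ≤ ∑ i, (u i - c i) ^ 2)
    (xstar : Fin N → ℝ) (hx : ∀ k : Fin N, xstar (σ k) = z k)
    (u : Fin N → ℝ) :
    (1 / 2) * ∑ i, (xstar i - y i) ^ 2
        + lam * ∑ k : Fin N, ∑ l ∈ Finset.Ioi k, |xstar k - xstar l|
      ≤ (1 / 2) * ∑ i, (u i - y i) ^ 2
        + lam * ∑ k : Fin N, ∑ l ∈ Finset.Ioi k, |u k - u l| := by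
  classical
  set ys : Fin N → ℝ := fun k => y (σ k) with hys
  set v : Fin N → ℝ := fun k => u (σ k) with hv
  set K : ℝ := ∑ k : Fin N, (lam * ((N : ℝ) - 2 * (k : ℕ) - 1) * ys k
      - lam ^ 2 * ((N : ℝ) - 2 * (k : ℕ) - 1) ^ 2 / 2) with hK
  -- sorted objective identity
  have sortedF : ∀ t : Fin N → ℝ, Antitone t →
      (1 / 2) * ∑ k, (t k - ys k) ^ 2
          + lam * ∑ k, ∑ l ∈ Finset.Ioi k, |t k - t l|
        = (1 / 2) * ∑ k, (t k - c k) ^ 2 + K := by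
    intro t ht
    rw [p_sorted t ht, hK]
    simp only [Finset.mul_sum, ← Finset.sum_add_distrib]
    refine Finset.sum_congr rfl fun k _ => ?_
    rw [hc k]
    ring
  -- rewrite both sides in sorted coordinates
  have hq1 : ∑ i, (xstar i - y i) ^ 2 = ∑ k, (z k - ys k) ^ 2 := by
    rw [← Equiv.sum_comp σ (fun i => (xstar i - y i) ^ 2)]
    exact Finset.sum_congr rfl fun k _ => by rw [hx k]
  have hp1 : ∑ k, ∑ l ∈ Finset.Ioi k, |xstar k - xstar l|
      = ∑ k, ∑ l ∈ Finset.Ioi k, |z k - z l| := by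
    rw [← p_perm xstar σ]
    exact Finset.sum_congr rfl fun k _ => Finset.sum_congr rfl fun l _ => by
      rw [hx k, hx l]
  have hq2 : ∑ i, (u i - y i) ^ 2 = ∑ k, (v k - ys k) ^ 2 :=
    (Equiv.sum_comp σ (fun i => (u i - y i) ^ 2)).symm
  have hp2 : ∑ k, ∑ l ∈ Finset.Ioi k, |u k - u l|
      = ∑ k, ∑ l ∈ Finset.Ioi k, |v k - v l| := (p_perm u σ).symm
  -- sort v
  set τ : Equiv.Perm (Fin N) := Tuple.sort (fun k => -(v k)) with hτ
  have hvt : Antitone fun k => v (τ k) := by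
    intro a b hab
    have := Tuple.monotone_sort (fun k => -(v k)) hab
    simpa using this
  -- rearrangement inequality
  have hre : ∑ k, v k * ys k ≤ ∑ k, v (τ k) * ys k := by
    have hmono : Monovary (fun k => v (τ k)) ys :=
      Antitone.monovary hvt hsort
    have h := hmono.sum_smul_comp_perm_le_sum_smul (σ := τ)
    simp only [smul_eq_mul] at h
    calc ∑ k, v k * ys k = ∑ k, v (τ k) * ys (τ k) :=
          (Equiv.sum_comp τ (fun k => v k * ys k)).symm
      _ ≤ ∑ k, v (τ k) * ys k := h
  -- quadratic comparison
  have hsq : ∑ k, (v (τ k) - ys k) ^ 2 ≤ ∑ k, (v k - ys k) ^ 2 := by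
    have e1 : ∑ k, (v (τ k)) ^ 2 = ∑ k, (v k) ^ 2 :=
      Equiv.sum_comp τ (fun k => (v k) ^ 2)
    have expand : ∀ a b : Fin N → ℝ, ∑ k, (a k - b k) ^ 2
        = ∑ k, (a k) ^ 2 - 2 * ∑ k, a k * b k + ∑ k, (b k) ^ 2 := by
      intro a b
      have : ∀ k, (a k - b k) ^ 2 = (a k) ^ 2 - 2 * (a k * b k) + (b k) ^ 2 :=
        fun k => by ring
      simp only [this, Finset.sum_add_distrib, Finset.sum_sub_distrib, ← Finset.mul_sum]
    rw [expand, expand, e1]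
    linarith
  -- p invariance under τ
  have hpτ : ∑ k, ∑ l ∈ Finset.Ioi k, |v (τ k) - v (τ l)|
      = ∑ k, ∑ l ∈ Finset.Ioi k, |v k - v l| := p_perm v τ
  -- chain
  have step1 : (1 / 2) * ∑ k, (z k - ys k) ^ 2
      + lam * ∑ k, ∑ l ∈ Finset.Ioi k, |z k - z l|
      = (1 / 2) * ∑ k, (z k - c k) ^ 2 + K := sortedF z hzD
  have step2 : (1 / 2) * ∑ k, (z k - c k) ^ 2 + K
      ≤ (1 / 2) * ∑ k, ((fun k => v (τ k)) k - c k) ^ 2 + K := by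
    have := hzproj (fun k => v (τ k)) hvt
    linarith
  have step3 : (1 / 2) * ∑ k, ((fun k => v (τ k)) k - c k) ^ 2 + K
      = (1 / 2) * ∑ k, (v (τ k) - ys k) ^ 2
        + lam * ∑ k, ∑ l ∈ Finset.Ioi k, |v (τ k) - v (τ l)| :=
    (sortedF (fun k => v (τ k)) hvt).symm
  have step4 : (1 / 2) * ∑ k, (v (τ k) - ys k) ^ 2
        + lam * ∑ k, ∑ l ∈ Finset.Ioi k, |v (τ k) - v (τ l)|
      ≤ (1 / 2) * ∑ k, (v k - ys k) ^ 2
        + lam * ∑ k, ∑ l ∈ Finset.Ioi k, |v k - v l| := by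
    rw [hpτ]
    linarith
  rw [hq1, hp1, hq2, hp2]
  calc (1 / 2) * ∑ k, (z k - ys k) ^ 2
        + lam * ∑ k, ∑ l ∈ Finset.Ioi k, |z k - z l|
      = (1 / 2) * ∑ k, (z k - c k) ^ 2 + K := step1
    _ ≤ (1 / 2) * ∑ k, ((fun k => v (τ k)) k - c k) ^ 2 + K := step2
    _ = (1 / 2) * ∑ k, (v (τ k) - ys k) ^ 2
        + lam * ∑ k, ∑ l ∈ Finset.Ioi k, |v (τ k) - v (τ l)| := step3
    _ ≤ (1 / 2) * ∑ k, (v k - ys k) ^ 2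
        + lam * ∑ k, ∑ l ∈ Finset.Ioi k, |v k - v l| := step4

/-- `Prox_{λp}(y) = P_yᵀ Π_D(P_y y − λ w)`.
Here `σ` sorts `y` nonincreasingly, `c k = y_{σ(k)} − λ w_k` with `w_k = N − 2k − 1`
(0-based), `z` is the Euclidean projection of `c` onto the cone `D` of nonincreasing
vectors, and `x*` is defined by `x*_{σ(k)} = z_k`.  Then `x*` is the unique minimizer
of `x ↦ ½‖x − y‖² + λ p(x)` where `p(x) = Σ_{k<l} |x_k − x_l|`. -/
theorem prox_clustered_lasso_via_projection (N : ℕ) (hN : 1 ≤ N) (lam : ℝ) (hlam : 0 < lam)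
    (y : Fin N → ℝ) (σ : Equiv.Perm (Fin N)) (hsort : Antitone fun k => y (σ k))
    (c : Fin N → ℝ) (hc : ∀ k : Fin N, c k = y (σ k) - lam * ((N : ℝ) - 2 * (k : ℕ) - 1))
    (z : Fin N → ℝ) (hzD : Antitone z)
    (hzproj : ∀ u : Fin N → ℝ, Antitone u →
      ∑ i, (z i - c i) ^ 2 ≤ ∑ i, (u i - c i) ^ 2)
    (xstar : Fin N → ℝ) (hx : ∀ k : Fin N, xstar (σ k) = z k) :
    ∀ u : Fin N → ℝ, u ≠ xstar →
      (1 / 2) * ∑ i, (xstar i - y i) ^ 2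
          + lam * ∑ k : Fin N, ∑ l ∈ Finset.Ioi k, |xstar k - xstar l|
        < (1 / 2) * ∑ i, (u i - y i) ^ 2
          + lam * ∑ k : Fin N, ∑ l ∈ Finset.Ioi k, |u k - u l| := by
  intro u hu
  set m : Fin N → ℝ := fun i => (u i + xstar i) / 2 with hm
  have h2 := weak_min N lam hlam y σ hsort c hc z hzD hzproj xstar hx m
  have hS : 0 < ∑ i, (u i - xstar i) ^ 2 := by
    obtain ⟨i, hi⟩ := Function.ne_iff.mp hu
    refine Finset.sum_pos' (fun j _ => sq_nonneg _) ⟨i, Finset.mem_univ i, ?_⟩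
    have : u i - xstar i ≠ 0 := sub_ne_zero.mpr hi
    positivity
  have hquad : ∑ i, (m i - y i) ^ 2
      = (1 / 2) * ∑ i, (u i - y i) ^ 2 + (1 / 2) * ∑ i, (xstar i - y i) ^ 2
        - (1 / 4) * ∑ i, (u i - xstar i) ^ 2 := by
    simp only [Finset.mul_sum, ← Finset.sum_sub_distrib, ← Finset.sum_add_distrib]
    refine Finset.sum_congr rfl fun i _ => ?_
    simp only [hm]
    ring
  have hpm : ∑ k, ∑ l ∈ Finset.Ioi k, |m k - m l|
      ≤ (1 / 2) * ∑ k, ∑ l ∈ Finset.Ioi k, |u k - u l|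
        + (1 / 2) * ∑ k, ∑ l ∈ Finset.Ioi k, |xstar k - xstar l| := by
    simp only [Finset.mul_sum, ← Finset.sum_add_distrib]
    refine Finset.sum_le_sum fun k _ => Finset.sum_le_sum fun l _ => ?_
    have : m k - m l = (1 / 2) * (u k - u l) + (1 / 2) * (xstar k - xstar l) := by
      simp only [hm]; ring
    rw [this]
    calc |(1 / 2) * (u k - u l) + (1 / 2) * (xstar k - xstar l)|
        ≤ |(1 / 2) * (u k - u l)| + |(1 / 2) * (xstar k - xstar l)| := abs_add_le _ _
      _ = (1 / 2) * |u k - u l| + (1 / 2) * |xstar k - xstar l| := by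
          rw [abs_mul, abs_mul, abs_of_nonneg (by norm_num : (0:ℝ) ≤ 1 / 2)]
  have hlampm := mul_le_mul_of_nonneg_left hpm hlam.le
  linarith
end

section
/- Let N ≥ 1, ρ > 0, λ > 0, and y ∈ ℝ^N. Let u be the unique minimizer over ℝ^N of x ↦ ½‖x − y‖² + λ p(x), and define v ∈ ℝ^N componentwise by v_i = sign(u_i)·max(|u_i| − ρ, 0). Then v is the unique minimizer over ℝ^N of x ↦ ½‖x − y‖² + ρ Σ_k |x_k| + λ p(x); that is, Prox_q(y) = Prox_{ρ‖·‖₁}(Prox_{λp}(y)). -/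
open Finset

private lemma eps_helper (a b S : ℝ) (hS : 0 ≤ S)
    (h : ∀ t : ℝ, 0 < t → t < 1 → a ≤ b + t * S) : a ≤ b := by
  refine le_of_forall_pos_le_add fun ε hε => ?_
  have hpos : 0 < S + 1 := by linarith
  have ht0 : 0 < min (1/2) (ε / (S + 1)) := lt_min (by norm_num) (div_pos hε hpos)
  have ht1 : min (1/2) (ε / (S + 1)) < 1 := lt_of_le_of_lt (min_le_left _ _) (by norm_num)
  have hmain := h _ ht0 ht1
  have h1 : min (1/2) (ε / (S + 1)) ≤ ε / (S + 1) := min_le_right _ _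
  have h2 : min (1/2) (ε / (S + 1)) * S ≤ (ε / (S + 1)) * S :=
    mul_le_mul_of_nonneg_right h1 hS
  have h3 : (ε / (S + 1)) * S ≤ ε := by
    rw [div_mul_eq_mul_div, div_le_iff₀ hpos]; nlinarith
  linarith

private lemma key_abs (a b t : ℝ) (hb : |b| ≤ |a|) (ht : |t| ≤ 1) :
    |a + t * b| = |a| + t * (|a + b| - |a|) := by
  have htb : |t * b| ≤ |a| := by
    rw [abs_mul]
    calc |t| * |b| ≤ 1 * |a| := mul_le_mul ht hb (abs_nonneg b) zero_le_one
    _ = |a| := one_mul _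
  have htb1 := le_abs_self (t * b)
  have htb2 := neg_abs_le (t * b)
  have hb1 := le_abs_self b
  have hb2 := neg_abs_le b
  rcases lt_trichotomy a 0 with h | h | h
  · have ha := abs_of_neg h
    have h1 : a + t * b ≤ 0 := by linarith
    have h2 : a + b ≤ 0 := by linarith
    rw [abs_of_nonpos h1, abs_of_nonpos h2, abs_of_neg h]; ring
  · have hb0 : b = 0 := by
      rw [h] at hb; simp only [abs_zero] at hb
      exact abs_eq_zero.mp (le_antisymm hb (abs_nonneg b))
    simp [h, hb0]
  · have ha := abs_of_pos h
    have h1 : 0 ≤ a + t * b := by linarith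
    have h2 : 0 ≤ a + b := by linarith
    rw [abs_of_nonneg h1, abs_of_nonneg h2, abs_of_pos h]; ring

private lemma clamp_lip (ρ a b : ℝ) :
    |max (-ρ) (min ρ a) - max (-ρ) (min ρ b)| ≤ |a - b| := by
  have h1 := le_abs_self (a - b)
  have h2 := neg_abs_le (a - b)
  rw [abs_sub_le_iff]
  constructor <;> (simp only [max_def, min_def]; split_ifs <;> linarith)

private lemma p_convex {N : ℕ} (u x : Fin N → ℝ) {t : ℝ} (ht0 : 0 ≤ t) (ht1 : t ≤ 1) :
    ∑ k : Fin N, ∑ l ∈ Ioi k, |((1-t) * u k + t * x k) - ((1-t) * u l + t * x l)|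
      ≤ (1-t) * ∑ k : Fin N, ∑ l ∈ Ioi k, |u k - u l|
        + t * ∑ k : Fin N, ∑ l ∈ Ioi k, |x k - x l| := by
  rw [Finset.mul_sum, Finset.mul_sum, ← Finset.sum_add_distrib]
  refine Finset.sum_le_sum fun k _ => ?_
  rw [Finset.mul_sum, Finset.mul_sum, ← Finset.sum_add_distrib]
  refine Finset.sum_le_sum fun l _ => ?_
  have h : ((1-t) * u k + t * x k) - ((1-t) * u l + t * x l)
      = (1-t)*(u k - u l) + t*(x k - x l) := by ring
  rw [h]
  calc |(1-t)*(u k - u l) + t*(x k - x l)|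
      ≤ |(1-t)*(u k - u l)| + |t*(x k - x l)| := abs_add_le _ _
    _ = (1-t)*|u k - u l| + t*|x k - x l| := by
        rw [abs_mul, abs_mul, abs_of_nonneg (by linarith : (0:ℝ) ≤ 1 - t), abs_of_nonneg ht0]

private lemma p_line {N : ℕ} (u d : Fin N → ℝ)
    (hd : ∀ k l : Fin N, |d k - d l| ≤ |u k - u l|) (t : ℝ) (ht : |t| ≤ 1) :
    ∑ k : Fin N, ∑ l ∈ Ioi k, |(u k + t * d k) - (u l + t * d l)|
      = ∑ k : Fin N, ∑ l ∈ Ioi k, |u k - u l|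
        + t * (∑ k : Fin N, ∑ l ∈ Ioi k, |(u k + d k) - (u l + d l)|
          - ∑ k : Fin N, ∑ l ∈ Ioi k, |u k - u l|) := by
  have main : ∀ k l : Fin N, |(u k + t * d k) - (u l + t * d l)|
      = |u k - u l| + t * (|(u k + d k) - (u l + d l)| - |u k - u l|) := by
    intro k l
    have h1 : (u k + t * d k) - (u l + t * d l) = (u k - u l) + t * (d k - d l) := by ring
    have h2 : (u k + d k) - (u l + d l) = (u k - u l) + (d k - d l) := by ring
    rw [h1, h2]; exact key_abs _ _ _ (hd k l) ht
  rw [Finset.sum_congr rfl fun k _ => Finset.sum_congr rfl fun l _ => main k l]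
  simp only [Finset.sum_add_distrib, ← Finset.mul_sum, Finset.sum_sub_distrib]

private lemma growth {N : ℕ} {lam : ℝ} (hlam : 0 ≤ lam) (y u : Fin N → ℝ)
    (hu : ∀ x : Fin N → ℝ,
      (1/2) * ∑ i, (u i - y i)^2 + lam * ∑ k : Fin N, ∑ l ∈ Ioi k, |u k - u l|
        ≤ (1/2) * ∑ i, (x i - y i)^2 + lam * ∑ k : Fin N, ∑ l ∈ Ioi k, |x k - x l|)
    (x : Fin N → ℝ) :
    (1/2) * ∑ i, (u i - y i)^2 + lam * ∑ k : Fin N, ∑ l ∈ Ioi k, |u k - u l|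
        + (1/2) * ∑ i, (x i - u i)^2
      ≤ (1/2) * ∑ i, (x i - y i)^2 + lam * ∑ k : Fin N, ∑ l ∈ Ioi k, |x k - x l| := by
  have hS0 : (0:ℝ) ≤ ∑ i, (x i - u i)^2 := Finset.sum_nonneg fun i _ => sq_nonneg _
  refine eps_helper _ _ ((1/2) * ∑ i, (x i - u i)^2) (by linarith) fun t ht0 ht1 => ?_
  have h1 := hu (fun i => (1-t) * u i + t * x i)
  beta_reduce at h1
  have hq : ∑ i, ((1-t) * u i + t * x i - y i)^2
      = (1-t) * ∑ i, (u i - y i)^2 + t * ∑ i, (x i - y i)^2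
        - t*(1-t) * ∑ i, (x i - u i)^2 := by
    rw [Finset.sum_congr rfl fun i (_ : i ∈ Finset.univ) =>
      (by ring : ((1-t) * u i + t * x i - y i)^2
        = (1-t) * (u i - y i)^2 + t * (x i - y i)^2 - t*(1-t) * (x i - u i)^2)]
    simp only [Finset.sum_add_distrib, Finset.sum_sub_distrib, ← Finset.mul_sum]
  have hp := p_convex u x (le_of_lt ht0) (le_of_lt ht1)
  have hp2 : lam * ∑ k : Fin N, ∑ l ∈ Ioi k, |((1-t) * u k + t * x k) - ((1-t) * u l + t * x l)|
      ≤ lam * ((1-t) * ∑ k : Fin N, ∑ l ∈ Ioi k, |u k - u l|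
        + t * ∑ k : Fin N, ∑ l ∈ Ioi k, |x k - x l|) :=
    mul_le_mul_of_nonneg_left hp hlam
  rw [hq] at h1
  set A := (1/2) * ∑ i, (u i - y i)^2 with hA
  set PU := ∑ k : Fin N, ∑ l ∈ Ioi k, |u k - u l| with hPU
  set B := (1/2) * ∑ i, (x i - y i)^2 with hB
  set PX := ∑ k : Fin N, ∑ l ∈ Ioi k, |x k - x l| with hPX
  set S := ∑ i, (x i - u i)^2 with hS
  have h2 : t * (A + lam * PU + (1/2) * S - (B + lam * PX) - t * ((1/2)*S)) ≤ 0 := by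
    nlinarith [h1, hp2]
  nlinarith [h2, ht0]

/-- `Prox_q(y) = Prox_{ρ‖·‖₁}(Prox_{λp}(y))`.
If `u` is the unique minimizer of `x ↦ ½‖x − y‖² + λ p(x)` (with
`p(x) = Σ_{k<l} |x_k − x_l|`) and `v_i = sign(u_i)·max(|u_i| − ρ, 0)`, then `v` is the
unique minimizer of `x ↦ ½‖x − y‖² + ρ Σ_k |x_k| + λ p(x)`. -/
theorem prox_q_soft_threshold_composition (N : ℕ) (hN : 1 ≤ N) (ρ lam : ℝ)
    (hρ : 0 < ρ) (hlam : 0 < lam) (y u : Fin N → ℝ)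
    (hu : ∀ x : Fin N → ℝ, x ≠ u →
      (1 / 2) * ∑ i, (u i - y i) ^ 2
          + lam * ∑ k : Fin N, ∑ l ∈ Finset.Ioi k, |u k - u l|
        < (1 / 2) * ∑ i, (x i - y i) ^ 2
          + lam * ∑ k : Fin N, ∑ l ∈ Finset.Ioi k, |x k - x l|)
    (v : Fin N → ℝ) (hv : ∀ i : Fin N, v i = Real.sign (u i) * max (|u i| - ρ) 0) :
    ∀ x : Fin N → ℝ, x ≠ v →
      (1 / 2) * ∑ i, (v i - y i) ^ 2 + ρ * ∑ i, |v i|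
          + lam * ∑ k : Fin N, ∑ l ∈ Finset.Ioi k, |v k - v l|
        < (1 / 2) * ∑ i, (x i - y i) ^ 2 + ρ * ∑ i, |x i|
          + lam * ∑ k : Fin N, ∑ l ∈ Finset.Ioi k, |x k - x l| := by
  -- non-strict minimality
  have hu' : ∀ x : Fin N → ℝ,
      (1/2) * ∑ i, (u i - y i)^2 + lam * ∑ k : Fin N, ∑ l ∈ Ioi k, |u k - u l|
        ≤ (1/2) * ∑ i, (x i - y i)^2 + lam * ∑ k : Fin N, ∑ l ∈ Ioi k, |x k - x l| := by
    intro x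
    by_cases hx : x = u
    · subst hx; exact le_rfl
    · exact le_of_lt (hu x hx)
  -- the clamp function
  set c : Fin N → ℝ := fun i => max (-ρ) (min ρ (u i)) with hc
  have hvc : ∀ i, v i = u i - c i := by
    intro i
    have hci : c i = max (-ρ) (min ρ (u i)) := by simp only [hc]
    rcases lt_trichotomy (u i) 0 with h | h | h
    · rw [hv i, Real.sign_of_neg h, abs_of_neg h, hci]
      rcases le_or_gt (-ρ) (u i) with h2 | h2
      · rw [min_eq_right (by linarith : u i ≤ ρ), max_eq_right h2,
          max_eq_right (by linarith : -u i - ρ ≤ 0)]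
        ring
      · rw [min_eq_right (by linarith : u i ≤ ρ), max_eq_left (by linarith : u i ≤ -ρ),
          max_eq_left (by linarith : (0:ℝ) ≤ -u i - ρ)]
        ring
    · have hci0 : c i = 0 := by
        rw [hci, h, min_eq_right (by linarith : (0:ℝ) ≤ ρ), max_eq_right (by linarith : -ρ ≤ (0:ℝ))]
      rw [hv i, hci0, h, Real.sign_zero]; ring
    · rw [hv i, Real.sign_of_pos h, abs_of_pos h, hci]
      rcases le_or_gt (u i) ρ with h2 | h2
      · rw [min_eq_right h2, max_eq_right (by linarith : -ρ ≤ u i),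
          max_eq_right (by linarith : u i - ρ ≤ 0)]
        ring
      · rw [min_eq_left (by linarith : ρ ≤ u i), max_eq_right (by linarith : -ρ ≤ ρ),
          max_eq_left (by linarith : (0:ℝ) ≤ u i - ρ)]
        ring
  have hcle : ∀ i, |c i| ≤ ρ := by
    intro i
    rw [abs_le, hc]
    refine ⟨le_max_left _ _, max_le (by linarith) (min_le_left _ _)⟩
  have hcv : ∀ i, ρ * |v i| = c i * v i := by
    intro i
    rcases le_or_gt (u i) ρ with h1 | h1
    · rcases le_or_gt (-ρ) (u i) with h2 | h2
      · have hci : c i = u i := by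
          rw [hc]; dsimp only; rw [min_eq_right h1, max_eq_right h2]
        have : v i = 0 := by rw [hvc i, hci]; ring
        simp [this]
      · have hci : c i = -ρ := by
          rw [hc]; dsimp only; rw [min_eq_right (by linarith), max_eq_left (by linarith)]
        have hvi : v i = u i + ρ := by rw [hvc i, hci]; ring
        rw [hvi, abs_of_neg (by linarith), hci]; ring
    · have hci : c i = ρ := by
        rw [hc]; dsimp only; rw [min_eq_left (by linarith), max_eq_right (by linarith)]
      have hvi : v i = u i - ρ := by rw [hvc i, hci]
      rw [hvi, abs_of_pos (by linarith), hci]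
  have hct : ∀ (i : Fin N) (s : ℝ), c i * s ≤ ρ * |s| := by
    intro i s
    calc c i * s ≤ |c i * s| := le_abs_self _
      _ = |c i| * |s| := abs_mul _ _
      _ ≤ ρ * |s| := mul_le_mul_of_nonneg_right (hcle i) (abs_nonneg s)
  -- the direction d = v - u
  set d : Fin N → ℝ := fun i => v i - u i with hd
  have hdc : ∀ i, d i = -(c i) := by
    intro i; rw [hd]; dsimp only; rw [hvc i]; ring
  have hdl : ∀ k l : Fin N, |d k - d l| ≤ |u k - u l| := by
    intro k l
    rw [hdc k, hdc l, show -(c k) - -(c l) = -(c k - c l) by ring, abs_neg]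
    exact clamp_lip ρ (u k) (u l)
  have hpv' : ∑ k : Fin N, ∑ l ∈ Ioi k, |(u k + d k) - (u l + d l)|
      = ∑ k : Fin N, ∑ l ∈ Ioi k, |v k - v l| :=
    Finset.sum_congr rfl fun k _ => Finset.sum_congr rfl fun l _ => by
      rw [show (u k + d k) - (u l + d l) = v k - v l by rw [hd]; dsimp only; ring]
  -- Step 2: key directional inequality
  have key2 : lam * (∑ k : Fin N, ∑ l ∈ Ioi k, |v k - v l|
        - ∑ k : Fin N, ∑ l ∈ Ioi k, |u k - u l|)
      ≤ ∑ i, d i * (y i - u i) := by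
    refine eps_helper _ _ ((1/2) * ∑ i, (d i)^2)
      (by positivity) fun t ht0 ht1 => ?_
    have hw := hu' (fun i => u i + (-t) * d i)
    beta_reduce at hw
    have hpw := p_line u d hdl (-t) (by rw [abs_neg, abs_of_pos ht0]; linarith)
    rw [hpv'] at hpw
    rw [hpw] at hw
    have hqw : ∑ i, (u i + (-t) * d i - y i)^2
        = ∑ i, (u i - y i)^2 + (2*t) * ∑ i, d i * (y i - u i)
          + t^2 * ∑ i, (d i)^2 := by
      rw [Finset.sum_congr rfl fun i (_ : i ∈ Finset.univ) =>
        (by ring : (u i + (-t) * d i - y i)^2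
          = (u i - y i)^2 + (2*t) * (d i * (y i - u i)) + t^2 * (d i)^2)]
      simp only [Finset.sum_add_distrib, ← Finset.mul_sum]
    rw [hqw] at hw
    set PU := ∑ k : Fin N, ∑ l ∈ Ioi k, |u k - u l|
    set PV := ∑ k : Fin N, ∑ l ∈ Ioi k, |v k - v l|
    set D1 := ∑ i, d i * (y i - u i)
    set D2 := ∑ i, (d i)^2
    -- hw : ... ≤ (1/2)*(QU + 2t*D1 + t^2*D2) + lam*(PU + (-t)*(PV - PU))
    have h2 : t * (lam * (PV - PU) - D1 - t * ((1/2) * D2)) ≤ 0 := by nlinarith [hw]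
    nlinarith [h2, ht0]
  -- Step 3: f v ≤ f u + (1/2)‖v-u‖²
  have step3 : (1/2) * ∑ i, (v i - y i)^2 + lam * ∑ k : Fin N, ∑ l ∈ Ioi k, |v k - v l|
      ≤ (1/2) * ∑ i, (u i - y i)^2 + lam * ∑ k : Fin N, ∑ l ∈ Ioi k, |u k - u l|
        + (1/2) * ∑ i, (v i - u i)^2 := by
    have hqv : ∑ i, (v i - y i)^2
        = ∑ i, (u i - y i)^2 + 2 * ∑ i, d i * (u i - y i) + ∑ i, (v i - u i)^2 := by
      rw [Finset.sum_congr rfl fun i (_ : i ∈ Finset.univ) =>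
        (by rw [hd]; dsimp only; ring : (v i - y i)^2
          = (u i - y i)^2 + 2 * (d i * (u i - y i)) + (v i - u i)^2)]
      simp only [Finset.sum_add_distrib, ← Finset.mul_sum]
    have hD : ∑ i, d i * (y i - u i) = -∑ i, d i * (u i - y i) := by
      rw [← Finset.sum_neg_distrib]
      exact Finset.sum_congr rfl fun i _ => by ring
    rw [hqv]
    rw [hD] at key2
    linarith [key2]
  -- Step 4: assembly
  intro x hxv
  have h1 := growth hlam.le y u hu' x
  have h2 : ∑ i, ((1/2) * (v i - u i)^2 + ρ * |v i| + (1/2) * (x i - v i)^2)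
      ≤ ∑ i, ((1/2) * (x i - u i)^2 + ρ * |x i|) := by
    refine Finset.sum_le_sum fun i _ => ?_
    have e1 : u i = v i + c i := by rw [hvc i]; ring
    rw [e1, hcv i]
    nlinarith [hct i (x i)]
  simp only [Finset.sum_add_distrib, ← Finset.mul_sum] at h2
  have hpos : 0 < ∑ i, (x i - v i)^2 := by
    obtain ⟨i, hi⟩ := Function.ne_iff.mp hxv
    refine Finset.sum_pos' (fun j _ => sq_nonneg _) ⟨i, Finset.mem_univ i, ?_⟩
    exact pow_two_pos_of_ne_zero (sub_ne_zero.mpr hi)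
  linarith [h1, h2, step3, hpos]
end

section
/- Let n ≥ 2, ρ, λ > 0, and let Y ∈ S^n be symmetric. Let c = BY ∈ ℝ^{n̄} be the vector of strictly upper-triangular entries of Y, and let u* be the unique minimizer over ℝ^{n̄} of u ↦ ‖u − c‖² + q(u). Define the symmetric matrix X* by X*_{ii} = Y_{ii} for all i and X*_{ij} = X*_{ji} = u*_{(i,j)} for i < j (where u*_{(i,j)} is the entry of u* at the position indexing (i,j)). Then X* is the unique minimizer over symmetric X ∈ S^n of X ↦ ½‖X − Y‖_F² + Q(X), i.e., X* = Prox_Q(Y) = Diag(diag(Y)) + B* Prox_q(2BY). -/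
/-- The strictly upper-triangular positions of an `n × n` matrix
(the index set of the vector `BX ∈ ℝ^{n̄}`, `n̄ = n(n−1)/2`). -/
abbrev UpperIdx (n : ℕ) := {p : Fin n × Fin n // p.1 < p.2}

/-- The clustered lasso function `q(u) = ρ Σ_k |u_k| + λ Σ_{k<l} |u_k − u_l|` on `ℝ^{n̄}`
(the pair term over unordered pairs is written as half the full double sum, which is
identical to `Σ_{k<l}` since the summand is symmetric and vanishes on the diagonal). -/
noncomputable def qcl (n : ℕ) (ρ lam : ℝ) (u : UpperIdx n → ℝ) : ℝ :=
  ρ * ∑ a : UpperIdx n, |u a|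
    + lam * ((1 : ℝ) / 2) * ∑ a : UpperIdx n, ∑ b : UpperIdx n, |u a - u b|

/-- The regularizer `Q(X) = ρ Σ_{i<j} |X_{ij}| + λ Σ_{pairs of distinct upper positions}
|X_{ij} − X_{st}|`, i.e. `Q(X) = q(BX)`. -/
noncomputable def Qcl (n : ℕ) (ρ lam : ℝ) (X : Matrix (Fin n) (Fin n) ℝ) : ℝ :=
  ρ * ∑ i : Fin n, ∑ j ∈ Finset.Ioi i, |X i j|
    + lam * ((1 : ℝ) / 2) * ∑ i : Fin n, ∑ j ∈ Finset.Ioi i,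
        ∑ s : Fin n, ∑ t ∈ Finset.Ioi s, |X i j - X s t|

lemma sum_upper (n : ℕ) (g : Fin n → Fin n → ℝ) :
    ∑ a : UpperIdx n, g a.1.1 a.1.2 = ∑ i : Fin n, ∑ j ∈ Finset.Ioi i, g i j := by
  rw [← Finset.sum_subtype (Finset.univ.filter (fun p : Fin n × Fin n => p.1 < p.2))
    (by simp) (fun p : Fin n × Fin n => g p.1 p.2)]
  rw [Finset.sum_filter, Fintype.sum_prod_type]
  refine Finset.sum_congr rfl fun i _ => ?_
  rw [← Finset.sum_filter]
  congr 1
  ext j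
  simp

lemma sum_symm_split (n : ℕ) (f : Fin n → Fin n → ℝ) (hf : ∀ i j, f i j = f j i) :
    ∑ i : Fin n, ∑ j : Fin n, f i j
      = ∑ i : Fin n, f i i + 2 * ∑ a : UpperIdx n, f a.1.1 a.1.2 := by
  have key := Finset.sum_sum_Ioi_add_eq_sum_sum_off_diag (f := f)
  have h1 : ∀ i : Fin n, ∑ j : Fin n, f i j = f i i + ∑ j ∈ ({i}ᶜ : Finset (Fin n)), f j i := by
    intro i
    rw [← Finset.sum_compl_add_sum {i} (f i), Finset.sum_singleton, add_comm]
    congr 1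
    exact Finset.sum_congr rfl fun j _ => hf i j
  rw [Finset.sum_congr rfl fun i _ => h1 i, Finset.sum_add_distrib, sum_upper]
  congr 1
  calc ∑ x : Fin n, ∑ j ∈ ({x}ᶜ : Finset (Fin n)), f j x
      = ∑ i : Fin n, ∑ j ∈ Finset.Ioi i, (f j i + f i j) := by
        refine Eq.trans ?_ key.symm
        exact Finset.sum_congr rfl fun i _ => Finset.sum_congr (by congr!) fun _ _ => rfl
    _ = 2 * ∑ i : Fin n, ∑ j ∈ Finset.Ioi i, f i j := by
        rw [Finset.mul_sum]
        refine Finset.sum_congr rfl fun i _ => ?_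
        rw [Finset.mul_sum]
        exact Finset.sum_congr rfl fun j _ => by rw [hf j i]; ring

lemma Qcl_eq_qcl (n : ℕ) (ρ lam : ℝ) (X : Matrix (Fin n) (Fin n) ℝ) :
    Qcl n ρ lam X = qcl n ρ lam (fun a : UpperIdx n => X a.1.1 a.1.2) := by
  unfold Qcl qcl
  congr 1
  · rw [sum_upper n (fun i j => |X i j|)]
  · congr 1
    rw [← sum_upper n (fun i j => ∑ s : Fin n, ∑ t ∈ Finset.Ioi s, |X i j - X s t|)]
    exact Finset.sum_congr rfl fun a _ =>
      (sum_upper n (fun s t => |X a.1.1 a.1.2 - X s t|)).symm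

lemma frob_split (n : ℕ) (X Y : Matrix (Fin n) (Fin n) ℝ) (hX : X.IsSymm) (hY : Y.IsSymm) :
    ∑ i : Fin n, ∑ j : Fin n, (X i j - Y i j) ^ 2
      = ∑ i : Fin n, (X i i - Y i i) ^ 2
        + 2 * ∑ a : UpperIdx n, (X a.1.1 a.1.2 - Y a.1.1 a.1.2) ^ 2 :=
  sum_symm_split n (fun i j => (X i j - Y i j) ^ 2)
    (fun i j => by simp only [hX.apply j i, hY.apply j i])

/-- `Prox_Q(Y) = Diag(diag(Y)) + B* Prox_q(2BY)`.
If `u*` is the unique minimizer of `u ↦ ‖u − BY‖² + q(u)` over `ℝ^{n̄}` and `X*` is the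
symmetric matrix with `X*_{ii} = Y_{ii}` and `X*_{ij} = X*_{ji} = u*_{(i,j)}` for `i < j`,
then `X*` is the unique minimizer of `X ↦ ½‖X − Y‖_F² + Q(X)` over symmetric matrices. -/
theorem prox_Q_via_prox_q (n : ℕ) (hn : 2 ≤ n) (ρ lam : ℝ) (hρ : 0 < ρ) (hlam : 0 < lam)
    (Y : Matrix (Fin n) (Fin n) ℝ) (hY : Y.IsSymm)
    (c : UpperIdx n → ℝ) (hc : ∀ a : UpperIdx n, c a = Y a.1.1 a.1.2)
    (ustar : UpperIdx n → ℝ)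
    (hustar : ∀ u : UpperIdx n → ℝ, u ≠ ustar →
      ∑ a : UpperIdx n, (ustar a - c a) ^ 2 + qcl n ρ lam ustar
        < ∑ a : UpperIdx n, (u a - c a) ^ 2 + qcl n ρ lam u)
    (Xstar : Matrix (Fin n) (Fin n) ℝ)
    (hXdiag : ∀ i : Fin n, Xstar i i = Y i i)
    (hXoff : ∀ a : UpperIdx n,
      Xstar a.1.1 a.1.2 = ustar a ∧ Xstar a.1.2 a.1.1 = ustar a) :
    ∀ X : Matrix (Fin n) (Fin n) ℝ, X.IsSymm → X ≠ Xstar →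
      (1 / 2) * ∑ i : Fin n, ∑ j : Fin n, (Xstar i j - Y i j) ^ 2 + Qcl n ρ lam Xstar
        < (1 / 2) * ∑ i : Fin n, ∑ j : Fin n, (X i j - Y i j) ^ 2 + Qcl n ρ lam X := by
  intro X hX hne
  -- Xstar is symmetric
  have hXstarSymm : Xstar.IsSymm := by
    rw [Matrix.IsSymm]
    ext i j
    rw [Matrix.transpose_apply]
    rcases lt_trichotomy i j with h | h | h
    · rw [(hXoff ⟨(i, j), h⟩).2, (hXoff ⟨(i, j), h⟩).1]
    · rw [h]
    · rw [(hXoff ⟨(j, i), h⟩).1, (hXoff ⟨(j, i), h⟩).2]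
  set uX : UpperIdx n → ℝ := fun a => X a.1.1 a.1.2 with huX
  have hQX : Qcl n ρ lam X = qcl n ρ lam uX := Qcl_eq_qcl n ρ lam X
  have hQS : Qcl n ρ lam Xstar = qcl n ρ lam ustar := by
    rw [Qcl_eq_qcl n ρ lam Xstar]
    congr 1
    ext a
    exact (hXoff a).1
  have hFX := frob_split n X Y hX hY
  have hFS := frob_split n Xstar Y hXstarSymm hY
  have hdiagS : ∑ i : Fin n, (Xstar i i - Y i i) ^ 2 = 0 := by
    apply Finset.sum_eq_zero
    intro i _
    rw [hXdiag i, sub_self]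
    ring
  have hcS : ∀ a : UpperIdx n, Xstar a.1.1 a.1.2 - Y a.1.1 a.1.2 = ustar a - c a := by
    intro a; rw [(hXoff a).1, hc a]
  have hcX : ∀ a : UpperIdx n, X a.1.1 a.1.2 - Y a.1.1 a.1.2 = uX a - c a := by
    intro a; rw [hc a]
  have hFS' : ∑ i : Fin n, ∑ j : Fin n, (Xstar i j - Y i j) ^ 2
      = 2 * ∑ a : UpperIdx n, (ustar a - c a) ^ 2 := by
    rw [hFS, hdiagS, zero_add]
    congr 1
    exact Finset.sum_congr rfl fun a _ => by rw [hcS a]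
  have hFX' : ∑ i : Fin n, ∑ j : Fin n, (X i j - Y i j) ^ 2
      = ∑ i : Fin n, (X i i - Y i i) ^ 2 + 2 * ∑ a : UpperIdx n, (uX a - c a) ^ 2 := by
    rw [hFX]
    congr 2
    exact Finset.sum_congr rfl fun a _ => by rw [hcX a]
  rw [hQX, hQS, hFX', hFS']
  have hdiagX : (0:ℝ) ≤ ∑ i : Fin n, (X i i - Y i i) ^ 2 :=
    Finset.sum_nonneg fun i _ => sq_nonneg _
  by_cases hu : uX = ustar
  · -- diagonals must differ somewhere
    have hoff : ∀ i j : Fin n, i ≠ j → X i j = Xstar i j := by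
      intro i j hij
      rcases lt_or_gt_of_ne hij with h | h
      · have := congrFun hu ⟨(i, j), h⟩
        simp only [huX] at this
        rw [this, (hXoff ⟨(i, j), h⟩).1]
      · have := congrFun hu ⟨(j, i), h⟩
        simp only [huX] at this
        rw [← hX.apply, ← hXstarSymm.apply, this, (hXoff ⟨(j, i), h⟩).1]
    have hdi : ∃ i : Fin n, X i i ≠ Y i i := by
      by_contra hall
      push_neg at hall
      apply hne
      ext i j
      by_cases hij : i = j
      · subst hij; rw [hall i, hXdiag i]
      · exact hoff i j hij
    obtain ⟨i0, hi0⟩ := hdi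
    have hpos : (0:ℝ) < ∑ i : Fin n, (X i i - Y i i) ^ 2 := by
      apply Finset.sum_pos' (fun i _ => sq_nonneg _)
      refine ⟨i0, Finset.mem_univ i0, ?_⟩
      have hne0 : X i0 i0 - Y i0 i0 ≠ 0 := sub_ne_zero.mpr hi0
      positivity
    have hequ : (fun a : UpperIdx n => uX a) = ustar := hu
    simp only [hu]
    linarith
  · have := hustar uX hu
    linarith
end
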